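/- Canonicity of axiom BD1: let F = (A, Q, ▷, ◇, ▷', ◇') be a heterogeneous LRC-algebra with canonical extensions A^δ, Q^δ, π-extended operation ▷^π, and σ-extended operations ◇^σ, ◇'^σ. Then ◇'^σ q ∧ (q ▷^π u) ≤ ◇^σ u for all q ∈ Q^δ and u ∈ A^δ. -/

import Mathlib

/-! ## Heterogeneous LRC-algebras -/

/-- A heterogeneous LRC-algebra `F = (W, R, ▷, ◇, ▷', ◇')`: `W` is a Heyting
algebra, `R` is a bounded distributive lattice with an associative product
`·` (here `mul`) preserving finite joins in each coordinate whose unit is the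
top element `1 = ⊤` of `R`; `◇ : W → W` (`dia`) and `◇' : R → W` (`diaR`)
preserve finite joins; `▷ : R × W → W` (`box`) turns finite joins in its first
coordinate into meets and is monotone in its second coordinate;
`▷' : R × R → W` (`boxR`) turns finite joins in its first coordinate into
meets and preserves finite meets in its second coordinate; and the axioms
B3, BD1, BD2 hold. -/
structure LRCAlgebra (W : Type*) (R : Type*) [iW : HeytingAlgebra W]
    [iR : DistribLattice R] [iB : BoundedOrder R] where
  mul : R → R → R
  mul_assoc : ∀ a b c, mul (mul a b) c = mul a (mul b c)
  mul_top : ∀ a, mul a ⊤ = a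
  top_mul : ∀ a, mul ⊤ a = a
  mul_sup_left : ∀ a b c, mul (a ⊔ b) c = mul a c ⊔ mul b c
  mul_sup_right : ∀ a b c, mul a (b ⊔ c) = mul a b ⊔ mul a c
  mul_bot_left : ∀ a, mul ⊥ a = ⊥
  mul_bot_right : ∀ a, mul a ⊥ = ⊥
  dia : W → W
  dia_bot : dia ⊥ = ⊥
  dia_sup : ∀ a b, dia (a ⊔ b) = dia a ⊔ dia b
  diaR : R → W
  diaR_bot : diaR ⊥ = ⊥
  diaR_sup : ∀ a b, diaR (a ⊔ b) = diaR a ⊔ diaR b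
  box : R → W → W
  box_sup : ∀ α β a, box (α ⊔ β) a = box α a ⊓ box β a
  box_bot : ∀ a, box ⊥ a = ⊤
  box_mono : ∀ (α : R) {a b : W}, a ≤ b → box α a ≤ box α b
  boxR : R → R → W
  boxR_sup : ∀ α β γ, boxR (α ⊔ β) γ = boxR α γ ⊓ boxR β γ
  boxR_bot : ∀ γ, boxR ⊥ γ = ⊤
  boxR_inf : ∀ α β γ, boxR α (β ⊓ γ) = boxR α β ⊓ boxR α γ
  boxR_top : ∀ α, boxR α ⊤ = ⊤
  b3 : ∀ α β a, box α (box β a) ≤ box (mul α β) a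
  bd1 : ∀ α a, diaR α ⊓ box α a ≤ dia a
  bd2 : ∀ α β, boxR α β ≤ box α (diaR β)

/-! ## Canonical extensions of bounded distributive lattices -/

/-- A *canonical extension* of a bounded distributive lattice `L` is a
complete (distributive) lattice `Lδ` containing `L` as a bounded sublattice
(via the embedding `e`) such that (denseness) every element of `Lδ` is both a
join of closed elements (meets of elements of `L`) and a meet of open elements
(joins of elements of `L`), and (compactness) whenever `⋀ e '' S ≤ ⋁ e '' T`
there are finite `F ⊆ S`, `G ⊆ T` with `⋀ e '' F ≤ ⋁ e '' G`. -/
structure CanonicalExtension (L : Type*) [DistribLattice L] [OrderBot L]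
    [OrderTop L] (Lδ : Type*) [CompleteLattice Lδ] where
  e : L → Lδ
  inj : Function.Injective e
  map_sup : ∀ a b, e (a ⊔ b) = e a ⊔ e b
  map_inf : ∀ a b, e (a ⊓ b) = e a ⊓ e b
  map_bot : e ⊥ = ⊥
  map_top : e ⊤ = ⊤
  dense_closed : ∀ u : Lδ,
    u = sSup {k | (∃ S : Set L, k = sInf (e '' S)) ∧ k ≤ u}
  dense_open : ∀ u : Lδ,
    u = sInf {o | (∃ S : Set L, o = sSup (e '' S)) ∧ u ≤ o}
  compact : ∀ S T : Set L, sInf (e '' S) ≤ sSup (e '' T) →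
    ∃ Fs Gs : Finset L, ↑Fs ⊆ S ∧ ↑Gs ⊆ T ∧
      sInf (e '' ↑Fs) ≤ sSup (e '' ↑Gs)

namespace CanonicalExtension

variable {L : Type*} [DistribLattice L] [OrderBot L] [OrderTop L]
  {Lδ : Type*} [CompleteLattice Lδ]

/-- An element of `Lδ` is *closed* if it is a meet of elements of `L`. -/
def IsClosed (C : CanonicalExtension L Lδ) (k : Lδ) : Prop :=
  ∃ S : Set L, k = sInf (C.e '' S)

/-- An element of `Lδ` is *open* if it is a join of elements of `L`. -/
def IsOpen (C : CanonicalExtension L Lδ) (o : Lδ) : Prop :=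
  ∃ S : Set L, o = sSup (C.e '' S)

end CanonicalExtension

/-! ## The σ- and π-extensions of the operations of a heterogeneous
LRC-algebra to the canonical extensions -/

section Extensions

variable {W R : Type*} [HeytingAlgebra W] [DistribLattice R] [BoundedOrder R]
  {Wδ Rδ : Type*} [CompletelyDistribLattice Wδ] [CompletelyDistribLattice Rδ]
  (F : LRCAlgebra W R)
  (CW : CanonicalExtension W Wδ) (CR : CanonicalExtension R Rδ)

/-- `◇^σ`: for closed `k`, `◇^σ k = ⋀{◇a : a ∈ W, k ≤ a}`, and for arbitrary
`u`, `◇^σ u = ⋁{◇^σ k : k closed, k ≤ u}`. -/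
noncomputable def diaSigma (u : Wδ) : Wδ :=
  ⨆ k : {k : Wδ // CW.IsClosed k ∧ k ≤ u},
    ⨅ a : {a : W // k.1 ≤ CW.e a}, CW.e (F.dia a.1)

/-- `◇'^σ`: for closed `κ`, `◇'^σ κ = ⋀{◇'α : α ∈ R, κ ≤ α}`, and for
arbitrary `q`, `◇'^σ q = ⋁{◇'^σ κ : κ closed, κ ≤ q}`. -/
noncomputable def diaRSigma (q : Rδ) : Wδ :=
  ⨆ κ : {κ : Rδ // CR.IsClosed κ ∧ κ ≤ q},
    ⨅ α : {α : R // κ.1 ≤ CR.e α}, CW.e (F.diaR α.1)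

/-- `κ ▷^π o` for `κ ∈ K(Rδ)`, `o ∈ O(Wδ)`:
`⋁{α ▷ a : a ∈ W, a ≤ o, α ∈ R, κ ≤ α}`. -/
noncomputable def boxPiKO (κ : Rδ) (o : Wδ) : Wδ :=
  ⨆ p : {p : R × W // CW.e p.2 ≤ o ∧ κ ≤ CR.e p.1}, CW.e (F.box p.1.1 p.1.2)

/-- `▷^π`: `q ▷^π u = ⋀{κ ▷^π o : o open, u ≤ o, κ closed, κ ≤ q}`. -/
noncomputable def boxPi (q : Rδ) (u : Wδ) : Wδ :=
  ⨅ x : {x : Rδ × Wδ // CW.IsOpen x.2 ∧ u ≤ x.2 ∧ CR.IsClosed x.1 ∧ x.1 ≤ q},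
    boxPiKO F CW CR x.1.1 x.1.2

/-- `κ ▷'^π ω` for `κ ∈ K(Rδ)`, `ω ∈ O(Rδ)`:
`⋁{α ▷' β : β ∈ R, β ≤ ω, α ∈ R, κ ≤ α}`. -/
noncomputable def boxRPiKO (κ ω : Rδ) : Wδ :=
  ⨆ p : {p : R × R // CR.e p.2 ≤ ω ∧ κ ≤ CR.e p.1}, CW.e (F.boxR p.1.1 p.1.2)

/-- `▷'^π`: `q ▷'^π w = ⋀{κ ▷'^π ω : ω open, w ≤ ω, κ closed, κ ≤ q}`. -/
noncomputable def boxRPi (q w : Rδ) : Wδ :=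
  ⨅ x : {x : Rδ × Rδ // CR.IsOpen x.2 ∧ w ≤ x.2 ∧ CR.IsClosed x.1 ∧ x.1 ≤ q},
    boxRPiKO F CW CR x.1.1 x.1.2

/-- `κ₁ ·^σ κ₂` for closed `κ₁, κ₂`: `⋀{α·β : α, β ∈ R, κ₁ ≤ α, κ₂ ≤ β}`. -/
noncomputable def mulSigmaKK (κ₁ κ₂ : Rδ) : Rδ :=
  ⨅ p : {p : R × R // κ₁ ≤ CR.e p.1 ∧ κ₂ ≤ CR.e p.2}, CR.e (F.mul p.1.1 p.1.2)

/-- `·^σ`: `q₁ ·^σ q₂ = ⋁{κ₁ ·^σ κ₂ : κ₁, κ₂ closed, κ₁ ≤ q₁, κ₂ ≤ q₂}`. -/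
noncomputable def mulSigma (q₁ q₂ : Rδ) : Rδ :=
  ⨆ p : {p : Rδ × Rδ // CR.IsClosed p.1 ∧ CR.IsClosed p.2 ∧
      p.1 ≤ q₁ ∧ p.2 ≤ q₂}, mulSigmaKK F CR p.1.1 p.1.2

end Extensions

/-!
Every element of `Wδ` is the join of the closed elements `x_P = ⋀ P` below it, `P` ranging over
prime filters of `W` (prime filter theorem plus compactness). Distributing `◇'^σ q = ⋁ ◇'^σ κ`
over the meet, it suffices to show `x_P ≤ ◇^σ u` whenever `x_P ≤ ◇'^σ κ ⊓ (q ▷^π u)` with `κ ≤ q`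
closed. Compactness turns these inequalities into membership in `P`: `◇'α ∈ P` for all `α ≥ κ`,
and for every open `o ≥ u` some `α ▷ a` with `κ ≤ α`, `a ≤ o` lies in `P`, so BD1 gives `◇a ∈ P`.
As `P` is prime, `{a | ◇a ∉ P}` is an ideal; by compactness its join `o` is not above `u`, and a
closed `k ≤ u` with `k ≰ o` has `◇b ∈ P` for every `b ≥ k`, i.e. `x_P ≤ ◇^σ k ≤ ◇^σ u`.
-/

variable {W R : Type*} [HeytingAlgebra W] [DistribLattice R] [BoundedOrder R]
  {Wδ Rδ : Type*} [CompletelyDistribLattice Wδ] [CompletelyDistribLattice Rδ]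

namespace Order

lemma PFilter.finsetInf_mem {L : Type*} [SemilatticeInf L] [OrderTop L] (P : PFilter L)
    {s : Finset L} (hs : ↑s ⊆ (P : Set L)) : s.inf id ∈ P :=
  Finset.inf_induction P.top_mem (fun _ ha _ hb => P.inf_mem ha hb) hs

lemma Ideal.PrimePair.mem_F_iff {L : Type*} [Preorder L] (IF : Ideal.PrimePair L) {a : L} :
    a ∈ IF.F ↔ a ∉ IF.I :=
  (Set.ext_iff.1 IF.compl_I_eq_F a).symm

variable {α β : Type*} [SemilatticeSup α] [OrderBot α] [SemilatticeSup β] [OrderBot β]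

def Ideal.comap (f : SupBotHom α β) (I : Ideal β) : Ideal α where
  carrier := f ⁻¹' I
  lower' _ _ hba ha := I.lower ((OrderHomClass.mono f) hba) ha
  nonempty' := ⟨⊥, by simp⟩
  directed' a ha b hb := ⟨a ⊔ b, by simp_all, le_sup_left, le_sup_right⟩

end Order

def LRCAlgebra.diaHom (F : LRCAlgebra W R) : SupBotHom W W :=
  ⟨⟨F.dia, F.dia_sup⟩, F.dia_bot⟩

namespace CanonicalExtension

open Order

section

variable {L : Type*} [DistribLattice L] [OrderBot L] [OrderTop L]
  {Lδ : Type*} [CompleteLattice Lδ] (C : CanonicalExtension L Lδ)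

lemma e_le_e_iff {a b : L} : C.e a ≤ C.e b ↔ a ≤ b := by
  rw [← inf_eq_left, ← C.map_inf, C.inj.eq_iff, inf_eq_left]

lemma e_mono : Monotone C.e := fun _ _ => C.e_le_e_iff.2

lemma sInf_image_finset (s : Finset L) : sInf (C.e '' s) = C.e (s.inf id) := by
  classical
  induction s using Finset.induction_on <;> simp [*, Set.image_insert_eq, C.map_inf, C.map_top]

lemma sSup_image_finset (s : Finset L) : sSup (C.e '' s) = C.e (s.sup id) := by
  classical
  induction s using Finset.induction_on <;> simp [*, Set.image_insert_eq, C.map_sup, C.map_bot]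

lemma exists_finset_inf_le_sup {S T : Set L} (h : sInf (C.e '' S) ≤ sSup (C.e '' T)) :
    ∃ s t : Finset L, ↑s ⊆ S ∧ ↑t ⊆ T ∧ s.inf id ≤ t.sup id := by
  obtain ⟨s, t, hs, ht, hst⟩ := C.compact S T h
  rw [C.sInf_image_finset, C.sSup_image_finset, C.e_le_e_iff] at hst
  exact ⟨s, t, hs, ht, hst⟩

def filterAbove (x : Lδ) : PFilter L :=
  IsPFilter.toPFilter (F := {a | x ≤ C.e a}) <| IsPFilter.of_def ⟨⊤, by simp [C.map_top]⟩
    (fun a ha b hb => ⟨a ⊓ b, by simp_all [C.map_inf], inf_le_left, inf_le_right⟩)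
    fun hab ha => ha.trans (C.e_mono hab)

def idealBelow (x : Lδ) : Ideal L where
  carrier := {a | C.e a ≤ x}
  lower' _ _ hba ha := (C.e_mono hba).trans ha
  nonempty' := ⟨⊥, by simp [C.map_bot]⟩
  directed' a ha b hb := ⟨a ⊔ b, by simp_all [C.map_sup], le_sup_left, le_sup_right⟩

/-- The closed element `x_P = ⋀ P` of `Lδ`. -/
def filterInf (P : PFilter L) : Lδ := sInf (C.e '' P)

lemma filterInf_le {P : PFilter L} {a : L} (ha : a ∈ P) : C.filterInf P ≤ C.e a :=
  sInf_le ⟨a, ha, rfl⟩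

lemma mem_of_filterInf_le {P : PFilter L} {b : L} (h : C.filterInf P ≤ C.e b) : b ∈ P := by
  obtain ⟨s, t, hs, ht, hst⟩ := C.exists_finset_inf_le_sup (T := {b}) (by simpa [filterInf])
  exact P.mem_of_le (hst.trans (Finset.sup_le fun c hc => (Set.mem_singleton_iff.1 (ht hc)).le))
    (P.finsetInf_mem hs)

lemma mem_of_le_sSup {I : Ideal L} {a : L} (h : C.e a ≤ sSup (C.e '' I)) : a ∈ I := by
  obtain ⟨s, t, hs, ht, hst⟩ := C.exists_finset_inf_le_sup (S := {a}) (by simpa)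
  exact I.lower ((Finset.le_inf fun c hc => (Set.mem_singleton_iff.1 (hs hc)).ge).trans hst)
    ((Ideal.finsetSup_mem_iff I).2 ht)

lemma exists_mem_of_filterInf_le_iSup (IF : Ideal.PrimePair L) {ι : Sort*} (g : ι → L)
    (h : C.filterInf IF.F ≤ ⨆ i, C.e (g i)) : ∃ i, g i ∈ IF.F := by
  rw [← sSup_range, ← Function.comp_def, Set.range_comp] at h
  obtain ⟨s, t, hs, ht, hst⟩ := C.exists_finset_inf_le_sup h
  have : t.sup id ∉ IF.I := IF.mem_F_iff.1 (IF.F.mem_of_le hst (IF.F.finsetInf_mem hs))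
  obtain ⟨c, hc, hcI⟩ : ∃ c ∈ t, c ∉ IF.I := by simpa using this
  obtain ⟨i, rfl⟩ := ht hc
  exact ⟨i, IF.mem_F_iff.2 hcI⟩

lemma exists_isClosed_le_not_le {u v : Lδ} (h : ¬ u ≤ v) :
    ∃ k, C.IsClosed k ∧ k ≤ u ∧ ¬ k ≤ v := by
  by_contra! hk
  exact h ((C.dense_closed u).trans_le (sSup_le fun k ⟨hkc, hku⟩ => hk k hkc hku))

lemma isClosed_le_iSup_filterInf {m : Lδ} (hm : C.IsClosed m) :
    m ≤ ⨆ (IF : Ideal.PrimePair L) (_ : C.filterInf IF.F ≤ m), C.filterInf IF.F := by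
  obtain ⟨S, rfl⟩ := hm
  set Z := ⨆ (IF : Ideal.PrimePair L) (_ : C.filterInf IF.F ≤ sInf (C.e '' S)), C.filterInf IF.F
  rw [C.dense_open Z]
  refine le_sInf fun o ⟨⟨T, hT⟩, hZo⟩ => ?_
  -- Otherwise a prime filter `P` separates `{a | m ≤ e a}` from `{a | e a ≤ o}`; then
  -- `x_P ≤ m`, so `x_P ≤ Z ≤ o`, and compactness puts into `P` an element below `o`.
  by_contra hSo
  have hdisj : Disjoint (C.filterAbove (sInf (C.e '' S)) : Set L) (C.idealBelow o) :=
    Set.disjoint_left.2 fun a ha hb => hSo (ha.trans hb)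
  obtain ⟨J, hJ, hoJ, hJdisj⟩ := DistribLattice.prime_ideal_of_disjoint_filter_ideal hdisj
  set IF := hJ.toPrimePair
  have hSF : ∀ s ∈ S, s ∈ IF.F := fun s hs => IF.mem_F_iff.2 fun hsJ =>
    Set.disjoint_left.1 hJdisj (show s ∈ C.filterAbove _ from sInf_le ⟨s, hs, rfl⟩) hsJ
  have hIF : C.filterInf IF.F ≤ sInf (C.e '' S) :=
    le_sInf (by rintro _ ⟨s, hs, rfl⟩; exact C.filterInf_le (hSF s hs))
  have : C.filterInf IF.F ≤ ⨆ t : T, C.e t := by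
    rw [← sSup_image', ← hT]
    exact (le_iSup₂_of_le IF hIF le_rfl).trans hZo
  obtain ⟨t, ht⟩ := C.exists_mem_of_filterInf_le_iSup IF _ this
  exact IF.mem_F_iff.1 ht (hoJ (hT ▸ le_sSup ⟨t, t.2, rfl⟩ : C.e t ≤ o))

lemma le_iSup_filterInf (u : Lδ) :
    u ≤ ⨆ (IF : Ideal.PrimePair L) (_ : C.filterInf IF.F ≤ u), C.filterInf IF.F := by
  refine (C.dense_closed u).le.trans (sSup_le fun m ⟨hm, hmu⟩ => ?_)
  exact (C.isClosed_le_iSup_filterInf hm).trans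
    (iSup_mono fun IF => iSup_mono' fun hIF => ⟨hIF.trans hmu, le_rfl⟩)

end

end CanonicalExtension

section LRC

variable (F : LRCAlgebra W R) (CW : CanonicalExtension W Wδ) (CR : CanonicalExtension R Rδ)

lemma boxPi_le_boxPiKO {κ q : Rδ} {u o : Wδ} (hκ : CR.IsClosed κ) (hκq : κ ≤ q)
    (ho : CW.IsOpen o) (huo : u ≤ o) : boxPi F CW CR q u ≤ boxPiKO F CW CR κ o :=
  iInf_le_of_le ⟨(κ, o), ho, huo, hκ, hκq⟩ le_rfl

lemma exists_dia_mem_of_filterInf_le_boxPi (IF : Order.Ideal.PrimePair W) {κ q : Rδ} {u o : Wδ}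
    (hκ : CR.IsClosed κ) (hκq : κ ≤ q) (hdiaR : ∀ α, κ ≤ CR.e α → F.diaR α ∈ IF.F)
    (hbox : CW.filterInf IF.F ≤ boxPi F CW CR q u) (ho : CW.IsOpen o) (huo : u ≤ o) :
    ∃ a, CW.e a ≤ o ∧ F.dia a ∈ IF.F := by
  obtain ⟨⟨⟨α, a⟩, hao, hκα⟩, hαa⟩ := CW.exists_mem_of_filterInf_le_iSup IF
    (fun p : {p : R × W // CW.e p.2 ≤ o ∧ κ ≤ CR.e p.1} => F.box p.1.1 p.1.2)
    (hbox.trans (boxPi_le_boxPiKO F CW CR hκ hκq ho huo))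
  exact ⟨a, hao, IF.F.mem_of_le (F.bd1 α a) (IF.F.inf_mem (hdiaR α hκα) hαa)⟩

lemma filterInf_le_diaSigma (IF : Order.Ideal.PrimePair W) {u : Wδ}
    (h : ∀ o, CW.IsOpen o → u ≤ o → ∃ a, CW.e a ≤ o ∧ F.dia a ∈ IF.F) :
    CW.filterInf IF.F ≤ diaSigma F CW u := by
  set J := IF.I.comap F.diaHom
  have hJ : ¬ u ≤ sSup (CW.e '' J) := fun hu => by
    obtain ⟨a, haJ, ha⟩ := h _ ⟨J, rfl⟩ hu
    exact IF.mem_F_iff.1 ha (CW.mem_of_le_sSup (I := J) haJ)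
  obtain ⟨k, hk, hku, hkJ⟩ := CW.exists_isClosed_le_not_le hJ
  refine le_iSup_of_le ⟨k, hk, hku⟩ (le_iInf fun ⟨b, hkb⟩ => CW.filterInf_le ?_)
  exact IF.mem_F_iff.2 fun hb => hkJ (hkb.trans (le_sSup ⟨b, hb, rfl⟩))

end LRC

/-- **Canonicity of axiom BD1**: in the canonical extension of a heterogeneous
LRC-algebra, `◇'^σ q ⊓ (q ▷^π u) ≤ ◇^σ u` for all `q ∈ Rδ` and `u ∈ Wδ`. -/
theorem canonicity_bd1 (F : LRCAlgebra W R)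
    (CW : CanonicalExtension W Wδ) (CR : CanonicalExtension R Rδ)
    (q : Rδ) (u : Wδ) :
    diaRSigma F CW CR q ⊓ boxPi F CW CR q u ≤ diaSigma F CW u := by
  rw [diaRSigma, iSup_inf_eq]
  refine iSup_le fun ⟨κ, hκ, hκq⟩ => (CW.le_iSup_filterInf _).trans (iSup₂_le fun IF hIF => ?_)
  have hdiaR : ∀ α, κ ≤ CR.e α → F.diaR α ∈ IF.F := fun α hκα =>
    CW.mem_of_filterInf_le (hIF.trans (inf_le_left.trans (iInf_le_of_le ⟨α, hκα⟩ le_rfl)))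
  exact filterInf_le_diaSigma F CW IF fun o ho huo =>
    exists_dia_mem_of_filterInf_le_boxPi F CW CR IF hκ hκq hdiaR (hIF.trans inf_le_right) ho huo
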